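/- Let S be a decision rule system with n(S) > 0 and let C ∈ {AR, EAR}. Then h_C(S) ≤ d(S)·β_C⁺(S). -/

import Mathlib

/- Common formal framework for decision rule systems and decision trees /
   acyclic decision graphs, following Durdymyradov & Moshkov. -/

attribute [local instance] Classical.propDecidable

noncomputable section

namespace DRS

/-- A decision rule `(a_{i₁}=δ₁) ∧ ⋯ ∧ (a_{i_m}=δ_m) → σ`:
`K` is the finite set of equations (attribute index, value), `rhs` is σ. -/
structure Rule where
  K : Finset (ℕ × ℕ)
  rhs : ℕ

/-- Well-formedness of a rule: the attributes on its left-hand side are pairwise different. -/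
def Rule.WF (r : Rule) : Prop := ∀ p ∈ r.K, ∀ q ∈ r.K, p.1 = q.1 → p = q

/-- A(r): the set of attributes of a rule. -/
def Rule.attrs (r : Rule) : Finset ℕ := r.K.image Prod.fst

/-- The length m of a rule. -/
def Rule.len (r : Rule) : ℕ := r.K.card

/-- A(S) -/
def attrs (S : Finset Rule) : Finset ℕ := S.biUnion Rule.attrs

/-- n(S) -/
def nPar (S : Finset Rule) : ℕ := (attrs S).card

/-- d(S): the maximum length of a rule of S. -/
def dPar (S : Finset Rule) : ℕ := S.sup Rule.len

/-- D(S): the set of right-hand sides. -/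
def rhsSet (S : Finset Rule) : Finset ℕ := S.image Rule.rhs

/-- V_S(a_i) -/
def VS (S : Finset Rule) (i : ℕ) : Finset ℕ :=
  ((S.biUnion Rule.K).filter fun p => p.1 = i).image Prod.snd

/-- k(S) -/
def kPar (S : Finset Rule) : ℕ := (attrs S).sup fun i => (VS S i).card

/-- Attribute values in trees are `Option ℕ`; `none` plays the role of the special value `*`.
`allowed S false i` is (the lift of) `V_S(a_i)`, and `allowed S true i` is `EV_S(a_i)`. -/
def allowed (S : Finset Rule) (ext : Bool) (i : ℕ) : Finset (Option ℕ) :=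
  (VS S i).image some ∪ (if ext then {none} else ∅)

/-- Consistency of an equation system over ω ∪ {*}. -/
def ConsistentE (E : Finset (ℕ × Option ℕ)) : Prop :=
  ∀ p ∈ E, ∀ q ∈ E, p.1 = q.1 → p.2 = q.2

/-- Lift the left-hand side of a rule to an equation system over ω ∪ {*}. -/
def liftK (K : Finset (ℕ × ℕ)) : Finset (ℕ × Option ℕ) :=
  K.image fun p => (p.1, some p.2)

/-- A finite directed labeled graph: the nodes are `0, …, n-1`, with a distinguished root,
each node carries either an attribute (working node) or a set of rules (terminal node),
and edges are labeled with elements of ω ∪ {*}. -/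
structure DGraph where
  n : ℕ
  root : ℕ
  label : ℕ → ℕ ⊕ Finset Rule
  edges : Finset (ℕ × Option ℕ × ℕ)

namespace DGraph

def step (G : DGraph) (u v : ℕ) : Prop := ∃ l, (u, l, v) ∈ G.edges

/-- The graph has no directed cycles. -/
def Acyclic (G : DGraph) : Prop := ∀ v, ¬ Relation.TransGen G.step v v

/-- A node is terminal if no edge leaves it. -/
def IsTerminal (G : DGraph) (v : ℕ) : Prop := ∀ e ∈ G.edges, e.1 ≠ v

/-- The set of rules attached to a (terminal) node. -/
def termSet (G : DGraph) (v : ℕ) : Finset Rule :=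
  Sum.elim (fun _ => (∅ : Finset Rule)) id (G.label v)

/-- `G` is an acyclic decision graph over the rule system `S`;
`ext = false` : branching over `V_S` (o-type), `ext = true` : branching over `EV_S` (e-type).
Terminal nodes are labeled with subsets of S; each working node is labeled with an
attribute `a` of `A(S)` and has exactly one leaving edge for every element of
`V_S(a)` (resp. `EV_S(a)`), the edges leaving it being labeled with these
pairwise different elements. -/
def IsDG (G : DGraph) (S : Finset Rule) (ext : Bool) : Prop :=
  G.root < G.n ∧
  (∀ e ∈ G.edges, e.1 < G.n ∧ e.2.2 < G.n) ∧
  G.Acyclic ∧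
  (∀ v < G.n,
    if G.IsTerminal v then
      ∃ Z : Finset Rule, G.label v = Sum.inr Z ∧ Z ⊆ S
    else
      ∃ a : ℕ, G.label v = Sum.inl a ∧ a ∈ attrs S ∧
        (∀ l : Option ℕ, (∃ w, (v, l, w) ∈ G.edges) ↔ l ∈ allowed S ext a) ∧
        (∀ l w w', (v, l, w) ∈ G.edges → (v, l, w') ∈ G.edges → w = w'))

/-- `G` is a finite directed tree with root: the root has no entering edge and every
other node has exactly one entering edge (together with acyclicity this makes the
graph a rooted tree). -/
def IsTree (G : DGraph) : Prop :=
  (∀ e ∈ G.edges, e.2.2 ≠ G.root) ∧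
  (∀ v < G.n, v ≠ G.root → ∃! e, e ∈ G.edges ∧ e.2.2 = v)

/-- `chainFrom G v p t`: the list `p` of (node, leaving-edge-label) pairs forms a
directed path in `G` starting at `v` and ending at `t`. -/
def chainFrom (G : DGraph) : ℕ → List (ℕ × Option ℕ) → ℕ → Prop
  | v, [], t => v = t
  | v, e :: rest, t => e.1 = v ∧ ∃ w, (v, e.2, w) ∈ G.edges ∧ chainFrom G w rest t

/-- A complete path: from the root to a terminal node; it is recorded by the list of
its working nodes with the labels of the edges taken, together with its terminal node. -/
def IsCompletePath (G : DGraph) (p : List (ℕ × Option ℕ)) (t : ℕ) : Prop :=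
  G.chainFrom G.root p t ∧ G.IsTerminal t ∧ t < G.n

/-- K(ξ): the equation system associated with a complete path. -/
def pathEqs (G : DGraph) (p : List (ℕ × Option ℕ)) : Finset (ℕ × Option ℕ) :=
  (p.filterMap fun e =>
    Sum.elim (fun a => some (a, e.2)) (fun _ => none) (G.label e.1)).toFinset

/-- L(Γ): the number of nodes. -/
def size (G : DGraph) : ℕ := G.n

/-- T(Γ): the number of terminal nodes labeled with pairwise different sets of rules. -/
def tCount (G : DGraph) : ℕ :=
  (((Finset.range G.n).filter fun v => G.IsTerminal v).image fun v => G.termSet v).card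

/-- h(Γ): the maximum number of working nodes on a complete path. -/
def depth (G : DGraph) : ℕ :=
  sSup {m | ∃ p t, G.IsCompletePath p t ∧ p.length = m}

/-- Path conditions for (the solutions of) the problems All Rules / EAll Rules. -/
def SolvesAR (G : DGraph) (S : Finset Rule) : Prop :=
  ∀ p t, G.IsCompletePath p t → ConsistentE (G.pathEqs p) →
    (∀ r ∈ G.termSet t, liftK r.K ⊆ G.pathEqs p) ∧
    (∀ r ∈ S, r ∉ G.termSet t → ¬ ConsistentE (liftK r.K ∪ G.pathEqs p))

/-- Path conditions for the problems All Decisions / EAll Decisions. -/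
def SolvesAD (G : DGraph) (S : Finset Rule) : Prop :=
  ∀ p t, G.IsCompletePath p t → ConsistentE (G.pathEqs p) →
    (∀ r ∈ G.termSet t, liftK r.K ⊆ G.pathEqs p) ∧
    (∀ r ∈ S, r ∉ G.termSet t → r.rhs ∉ (G.termSet t).image Rule.rhs →
      ¬ ConsistentE (liftK r.K ∪ G.pathEqs p))

/-- Path conditions for the problems Some Rules / ESome Rules. -/
def SolvesSR (G : DGraph) (S : Finset Rule) : Prop :=
  ∀ p t, G.IsCompletePath p t → ConsistentE (G.pathEqs p) →
    (∀ r ∈ G.termSet t, liftK r.K ⊆ G.pathEqs p) ∧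
    (G.termSet t = ∅ → ∀ r ∈ S, ¬ ConsistentE (liftK r.K ∪ G.pathEqs p))

end DGraph

/-- Γ is a decision tree over S solving AR(S) (an o-tree). -/
def TreeSolvesAR (S : Finset Rule) (G : DGraph) : Prop :=
  G.IsDG S false ∧ G.IsTree ∧ G.SolvesAR S
/-- Γ is a decision tree over S solving EAR(S) (an e-tree). -/
def TreeSolvesEAR (S : Finset Rule) (G : DGraph) : Prop :=
  G.IsDG S true ∧ G.IsTree ∧ G.SolvesAR S
/-- Γ is a decision tree over S solving AD(S) (an o-tree). -/
def TreeSolvesAD (S : Finset Rule) (G : DGraph) : Prop :=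
  G.IsDG S false ∧ G.IsTree ∧ G.SolvesAD S
/-- Γ is a decision tree over S solving EAD(S) (an e-tree). -/
def TreeSolvesEAD (S : Finset Rule) (G : DGraph) : Prop :=
  G.IsDG S true ∧ G.IsTree ∧ G.SolvesAD S
/-- Γ is a decision tree over S solving SR(S) (an o-tree). -/
def TreeSolvesSR (S : Finset Rule) (G : DGraph) : Prop :=
  G.IsDG S false ∧ G.IsTree ∧ G.SolvesSR S
/-- Γ is a decision tree over S solving ESR(S) (an e-tree). -/
def TreeSolvesESR (S : Finset Rule) (G : DGraph) : Prop :=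
  G.IsDG S true ∧ G.IsTree ∧ G.SolvesSR S

/-- L_AR(S): minimum number of nodes of a decision tree over S solving AR(S). -/
def L_AR (S : Finset Rule) : ℕ := sInf {m | ∃ G : DGraph, TreeSolvesAR S G ∧ G.size = m}
def L_EAR (S : Finset Rule) : ℕ := sInf {m | ∃ G : DGraph, TreeSolvesEAR S G ∧ G.size = m}
def L_AD (S : Finset Rule) : ℕ := sInf {m | ∃ G : DGraph, TreeSolvesAD S G ∧ G.size = m}
def L_EAD (S : Finset Rule) : ℕ := sInf {m | ∃ G : DGraph, TreeSolvesEAD S G ∧ G.size = m}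
def L_SR (S : Finset Rule) : ℕ := sInf {m | ∃ G : DGraph, TreeSolvesSR S G ∧ G.size = m}
def L_ESR (S : Finset Rule) : ℕ := sInf {m | ∃ G : DGraph, TreeSolvesESR S G ∧ G.size = m}

/-- T_AR(S): minimum number of differently-labeled terminal nodes of a decision tree
over S solving AR(S); similarly for the other problems. -/
def T_AR (S : Finset Rule) : ℕ := sInf {m | ∃ G : DGraph, TreeSolvesAR S G ∧ G.tCount = m}
def T_EAR (S : Finset Rule) : ℕ := sInf {m | ∃ G : DGraph, TreeSolvesEAR S G ∧ G.tCount = m}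
def T_AD (S : Finset Rule) : ℕ := sInf {m | ∃ G : DGraph, TreeSolvesAD S G ∧ G.tCount = m}
def T_EAD (S : Finset Rule) : ℕ := sInf {m | ∃ G : DGraph, TreeSolvesEAD S G ∧ G.tCount = m}
def T_SR (S : Finset Rule) : ℕ := sInf {m | ∃ G : DGraph, TreeSolvesSR S G ∧ G.tCount = m}
def T_ESR (S : Finset Rule) : ℕ := sInf {m | ∃ G : DGraph, TreeSolvesESR S G ∧ G.tCount = m}

/-- h_AR(S): minimum depth of a decision tree over S solving AR(S); similarly for the others. -/
def h_AR (S : Finset Rule) : ℕ := sInf {m | ∃ G : DGraph, TreeSolvesAR S G ∧ G.depth = m}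
def h_EAR (S : Finset Rule) : ℕ := sInf {m | ∃ G : DGraph, TreeSolvesEAR S G ∧ G.depth = m}
def h_AD (S : Finset Rule) : ℕ := sInf {m | ∃ G : DGraph, TreeSolvesAD S G ∧ G.depth = m}
def h_EAD (S : Finset Rule) : ℕ := sInf {m | ∃ G : DGraph, TreeSolvesEAD S G ∧ G.depth = m}
def h_SR (S : Finset Rule) : ℕ := sInf {m | ∃ G : DGraph, TreeSolvesSR S G ∧ G.depth = m}
def h_ESR (S : Finset Rule) : ℕ := sInf {m | ∃ G : DGraph, TreeSolvesESR S G ∧ G.depth = m}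

/-- L^DG_SR(S): minimum number of nodes of an acyclic decision graph solving SR(S). -/
def LDG_SR (S : Finset Rule) : ℕ :=
  sInf {m | ∃ G : DGraph, G.IsDG S false ∧ G.SolvesSR S ∧ G.size = m}
/-- L^DG_ESR(S): minimum number of nodes of an acyclic decision graph solving ESR(S). -/
def LDG_ESR (S : Finset Rule) : ℕ :=
  sInf {m | ∃ G : DGraph, G.IsDG S true ∧ G.SolvesSR S ∧ G.size = m}

/-- A node cover of the hypergraph G(S). -/
def IsNodeCover (S : Finset Rule) (B : Finset ℕ) : Prop :=
  B ⊆ attrs S ∧ ∀ r ∈ S, (Rule.attrs r).Nonempty → (Rule.attrs r ∩ B).Nonempty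

/-- β(S): the minimum cardinality of a node cover of the hypergraph G(S). -/
def beta (S : Finset Rule) : ℕ := sInf {c | ∃ B, IsNodeCover S B ∧ B.card = c}

/-- S⁺: the subsystem of S consisting of all rules of length d(S). -/
def Splus (S : Finset Rule) : Finset Rule := S.filter fun r => r.len = dPar S

/-- β⁺(S) = β(S⁺). -/
def betaPlus (S : Finset Rule) : ℕ := beta (Splus S)

/-- The rule r_α : delete from the left-hand side of r all equations belonging to α. -/
def Rule.restrict (r : Rule) (α : Finset (ℕ × Option ℕ)) : Rule :=
  ⟨r.K.filter fun p => (p.1, some p.2) ∉ α, r.rhs⟩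

/-- S_α : the system of the rules r_α for all r ∈ S with K(r) ∪ α consistent. -/
def restrict (S : Finset Rule) (α : Finset (ℕ × Option ℕ)) : Finset Rule :=
  (S.filter fun r => ConsistentE (liftK r.K ∪ α)).image fun r => r.restrict α

/-- E_C(S): consistent equation systems whose attributes are in A(S) and whose
values belong to V_S (ext = false) resp. EV_S (ext = true). -/
def ESys (S : Finset Rule) (ext : Bool) : Set (Finset (ℕ × Option ℕ)) :=
  {α | ConsistentE α ∧ ∀ p ∈ α, p.1 ∈ attrs S ∧ p.2 ∈ allowed S ext p.1}

/-- I_SR(S). -/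
def I_SR (S : Finset Rule) : Finset Rule :=
  if ∃ r ∈ S, r.len = 0 then S.filter fun r => r.len = 0 else S

/-- D₀(S): the right-hand sides of the rules of S of length 0. -/
def D0 (S : Finset Rule) : Finset ℕ := (S.filter fun r => r.len = 0).image Rule.rhs

/-- I_AD(S). -/
def I_AD (S : Finset Rule) : Finset Rule :=
  S.filter fun r => r.len = 0 ∨ r.rhs ∉ D0 S

def betaC (S : Finset Rule) (ext : Bool) : ℕ :=
  sSup {b | ∃ α ∈ ESys S ext, beta (restrict S α) = b}
def betaCplus (S : Finset Rule) (ext : Bool) : ℕ :=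
  sSup {b | ∃ α ∈ ESys S ext, betaPlus (restrict S α) = b}
def betaI (S : Finset Rule) (I : Finset Rule → Finset Rule) : ℕ :=
  sSup {b | ∃ α ∈ ESys S true, beta (I (restrict S α)) = b}
def betaIplus (S : Finset Rule) (I : Finset Rule → Finset Rule) : ℕ :=
  sSup {b | ∃ α ∈ ESys S true, betaPlus (I (restrict S α)) = b}

def beta_AR (S : Finset Rule) : ℕ := betaC S false
def beta_AD (S : Finset Rule) : ℕ := betaC S false
def beta_SR (S : Finset Rule) : ℕ := betaC S false
def beta_EAR (S : Finset Rule) : ℕ := betaC S true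
def beta_ARplus (S : Finset Rule) : ℕ := betaCplus S false
def beta_ADplus (S : Finset Rule) : ℕ := betaCplus S false
def beta_SRplus (S : Finset Rule) : ℕ := betaCplus S false
def beta_EARplus (S : Finset Rule) : ℕ := betaCplus S true
def beta_EAD (S : Finset Rule) : ℕ := betaI S I_AD
def beta_EADplus (S : Finset Rule) : ℕ := betaIplus S I_AD
def beta_ESR (S : Finset Rule) : ℕ := betaI S I_SR
def beta_ESRplus (S : Finset Rule) : ℕ := betaIplus S I_SR

/-- R_SR(S). -/
def R_SR (S : Finset Rule) : Finset Rule :=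
  S.filter fun r => ¬ ∃ r' ∈ S, r'.K ⊂ r.K

/-- R_AD(S). -/
def R_AD (S : Finset Rule) : Finset Rule :=
  S.filter fun r => ¬ ∃ r' ∈ S, r'.K ⊂ r.K ∧ r'.rhs = r.rhs

/-- A reduced decision rule system. -/
def Reduced (S : Finset Rule) : Prop :=
  attrs S ⊆ Finset.range (nPar S + 1) ∧
  rhsSet S ⊆ Finset.range ((rhsSet S).card + 1) ∧
  (∀ i ∈ attrs S, VS S i ⊆ Finset.range (kPar S + 1)) ∧
  1 ≤ dPar S

/-- Length of the binary representation of a natural number. -/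
def bitLen (m : ℕ) : ℕ := max 1 (Nat.size m)

/-- The length of the word "(a⟨i⟩=⟨δ⟩)" encoding one equation. -/
def eqLen (p : ℕ × ℕ) : ℕ := 4 + bitLen p.1 + bitLen p.2

/-- The length of the word encoding one rule (with the "∧" signs and "→"). -/
def Rule.wordLen (r : Rule) : ℕ :=
  (∑ p ∈ r.K, eqLen p) + (r.K.card - 1) + 1 + bitLen r.rhs

/-- size(S): the length of the word representing S (with ";" separating the rules). -/
def sizeS (S : Finset Rule) : ℕ := (∑ r ∈ S, r.wordLen) + (S.card - 1)

/-! Greedy strategy. Let `α` be the set of answers obtained so far. While `d(S_α) > 0`, ask all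
attributes of a minimum node cover of `(S_α)⁺`: every rule of maximal length in `S_α` then has one
of its equations fixed by the answers, so `d(S_α)` drops by at least one per phase, and a phase
costs `β⁺(S_α) ≤ β_C⁺(S)` queries (`α` stays in `E_C(S)` because the attributes of `S_α` do not
occur in `α`). After at most `d(S)` phases `d(S_α) = 0`, i.e. every rule of `S` compatible with the
answers has its whole left-hand side among them, and these are exactly the rules the leaf has to
report. -/

open Finset

section Restriction

variable {S : Finset Rule} {α α' : Finset (ℕ × Option ℕ)}

lemma ConsistentE.mono {E F : Finset (ℕ × Option ℕ)} (hF : ConsistentE F) (h : E ⊆ F) :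
    ConsistentE E :=
  fun p hp q hq => hF p (h hp) q (h hq)

lemma ConsistentE.union (hα : ConsistentE α) (hα' : ConsistentE α')
    (h : ∀ e ∈ α', ∀ l, (e.1, l) ∉ α) : ConsistentE (α ∪ α') := by
  intro p hp q hq hpq
  rcases mem_union.1 hp with hp | hp <;> rcases mem_union.1 hq with hq | hq
  · exact hα p hp q hq hpq
  · exact absurd (hpq ▸ hp) (h q hq p.2)
  · exact absurd (hpq ▸ hq) (h p hp q.2)
  · exact hα' p hp q hq hpq

lemma consistentE_toFinset {p : List (ℕ × Option ℕ)} (h : (p.map Prod.fst).Nodup) :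
    ConsistentE p.toFinset := by
  intro e he e' he' hee'
  rw [List.inj_on_of_nodup_map h (List.mem_toFinset.1 he) (List.mem_toFinset.1 he') hee']

lemma some_eq_of_consistentE_liftK_union {K : Finset (ℕ × ℕ)} {p : ℕ × ℕ} {l : Option ℕ}
    (hc : ConsistentE (liftK K ∪ α)) (hp : p ∈ K) (hl : (p.1, l) ∈ α) : l = some p.2 :=
  (hc _ (mem_union_left _ (mem_image_of_mem _ hp)) _ (mem_union_right _ hl) rfl).symm

lemma mem_restrict {r' : Rule} :
    r' ∈ restrict S α ↔ ∃ r ∈ S, ConsistentE (liftK r.K ∪ α) ∧ r.restrict α = r' := by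
  simp [restrict, and_assoc]

lemma mem_attrs {a : ℕ} : a ∈ attrs S ↔ ∃ r ∈ S, ∃ p ∈ r.K, p.1 = a := by
  simp [attrs, Rule.attrs]

lemma attrs_mono {T : Finset Rule} (h : T ⊆ S) : attrs T ⊆ attrs S :=
  biUnion_subset_biUnion_of_subset_left _ h

lemma Rule.mem_restrict_K {r : Rule} {p : ℕ × ℕ} :
    p ∈ (r.restrict α).K ↔ p ∈ r.K ∧ (p.1, some p.2) ∉ α :=
  mem_filter

lemma Rule.restrict_K_antitone {r : Rule} (h : α ⊆ α') :
    (r.restrict α').K ⊆ (r.restrict α).K :=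
  fun _ hp => Rule.mem_restrict_K.2
    ⟨(Rule.mem_restrict_K.1 hp).1, fun hα => (Rule.mem_restrict_K.1 hp).2 (h hα)⟩

lemma Rule.len_restrict_lt {r : Rule} {p : ℕ × ℕ} (h : α ⊆ α')
    (hp : p ∈ (r.restrict α).K) (hp' : (p.1, some p.2) ∈ α') :
    (r.restrict α').len < (r.restrict α).len :=
  card_lt_card <| (ssubset_iff_of_subset (Rule.restrict_K_antitone h)).2
    ⟨p, hp, fun hp'' => (Rule.mem_restrict_K.1 hp'').2 hp'⟩

lemma attrs_restrict_subset : attrs (restrict S α) ⊆ attrs S := by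
  intro a ha
  obtain ⟨_, hr', p, hp, rfl⟩ := mem_attrs.1 ha
  obtain ⟨r, hr, -, rfl⟩ := mem_restrict.1 hr'
  exact mem_attrs.2 ⟨r, hr, p, (Rule.mem_restrict_K.1 hp).1, rfl⟩

lemma dPar_restrict_le : dPar (restrict S α) ≤ dPar S := by
  refine Finset.sup_le fun r' hr' => ?_
  obtain ⟨r, hr, -, rfl⟩ := mem_restrict.1 hr'
  exact (card_le_card (filter_subset _ _)).trans (le_sup (f := Rule.len) hr)

lemma notMem_of_mem_attrs_restrict {a : ℕ} (ha : a ∈ attrs (restrict S α)) (l : Option ℕ) :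
    (a, l) ∉ α := by
  intro hl
  obtain ⟨_, hr', p, hp, rfl⟩ := mem_attrs.1 ha
  obtain ⟨r, -, hc, rfl⟩ := mem_restrict.1 hr'
  have hp := Rule.mem_restrict_K.1 hp
  exact hp.2 (some_eq_of_consistentE_liftK_union hc hp.1 hl ▸ hl)

lemma liftK_subset_of_dPar_restrict_eq_zero (h : dPar (restrict S α) = 0) {r : Rule}
    (hr : r ∈ S) (hc : ConsistentE (liftK r.K ∪ α)) : liftK r.K ⊆ α := by
  have hlen : (r.restrict α).len = 0 :=
    Nat.le_zero.1 (h ▸ le_sup (f := Rule.len) (mem_restrict.2 ⟨r, hr, hc, rfl⟩))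
  intro q hq
  obtain ⟨p, hp, rfl⟩ := mem_image.1 hq
  by_contra hpα
  exact notMem_empty p (card_eq_zero.1 hlen ▸ Rule.mem_restrict_K.2 ⟨hp, hpα⟩)

lemma dPar_restrict_lt {B : Finset ℕ} (hB : IsNodeCover (Splus (restrict S α)) B)
    (hd : 0 < dPar (restrict S α)) (hαα' : α ⊆ α') (hBα' : ∀ a ∈ B, ∃ l, (a, l) ∈ α') :
    dPar (restrict S α') < dPar (restrict S α) := by
  refine (Finset.sup_lt_iff hd).2 fun r' hr' => ?_
  obtain ⟨r, hr, hc', rfl⟩ := mem_restrict.1 hr'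
  have hrα : r.restrict α ∈ restrict S α :=
    mem_restrict.2 ⟨r, hr, hc'.mono (union_subset_union_right hαα'), rfl⟩
  rcases (le_sup (f := Rule.len) hrα).lt_or_eq with hlt | heq
  · exact (card_le_card (Rule.restrict_K_antitone hαα')).trans_lt hlt
  · have hne : (r.restrict α).attrs.Nonempty :=
      (card_pos.1 (heq ▸ hd : 0 < (r.restrict α).len)).image _
    obtain ⟨a, ha⟩ := hB.2 _ (mem_filter.2 ⟨hrα, heq⟩) hne
    obtain ⟨p, hp, rfl⟩ := mem_image.1 (mem_inter.1 ha).1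
    obtain ⟨l, hl⟩ := hBα' p.1 (mem_inter.1 ha).2
    have hpα' : (p.1, some p.2) ∈ α' :=
      some_eq_of_consistentE_liftK_union hc' (Rule.mem_restrict_K.1 hp).1 hl ▸ hl
    exact (Rule.len_restrict_lt hαα' hp hpα').trans_eq heq

end Restriction

section Covers

variable {S : Finset Rule} {ext : Bool} {α : Finset (ℕ × Option ℕ)}

lemma isNodeCover_attrs (T : Finset Rule) : IsNodeCover T (attrs T) := by
  refine ⟨subset_rfl, fun r hr ⟨a, ha⟩ => ⟨a, mem_inter.2 ⟨ha, ?_⟩⟩⟩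
  exact mem_biUnion.2 ⟨r, hr, ha⟩

lemma exists_isNodeCover_card_eq_beta (T : Finset Rule) :
    ∃ B, IsNodeCover T B ∧ B.card = beta T :=
  Nat.sInf_mem (s := {c | ∃ B, IsNodeCover T B ∧ B.card = c}) ⟨_, attrs T, isNodeCover_attrs T, rfl⟩

def minCover (T : Finset Rule) : Finset ℕ := (exists_isNodeCover_card_eq_beta T).choose

lemma isNodeCover_minCover (T : Finset Rule) : IsNodeCover T (minCover T) :=
  (exists_isNodeCover_card_eq_beta T).choose_spec.1

lemma card_minCover (T : Finset Rule) : (minCover T).card = beta T :=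
  (exists_isNodeCover_card_eq_beta T).choose_spec.2

lemma minCover_splus_subset : minCover (Splus (restrict S α)) ⊆ attrs (restrict S α) :=
  (isNodeCover_minCover _).1.trans (attrs_mono (filter_subset _ _))

lemma nonempty_allowed {a : ℕ} (ha : a ∈ attrs S) : (allowed S ext a).Nonempty := by
  obtain ⟨r, hr, p, hp, rfl⟩ := mem_attrs.1 ha
  refine ⟨some p.2, mem_union_left _ (mem_image_of_mem _ ?_)⟩
  exact mem_image.2 ⟨p, mem_filter.2 ⟨mem_biUnion.2 ⟨r, hr, hp⟩, rfl⟩, rfl⟩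

lemma betaPlus_restrict_le_betaCplus (hα : α ∈ ESys S ext) :
    betaPlus (restrict S α) ≤ betaCplus S ext := by
  refine le_csSup ⟨nPar S, ?_⟩ ⟨α, hα, rfl⟩
  rintro _ ⟨α', -, rfl⟩
  rw [betaPlus, ← card_minCover]
  exact card_le_card (minCover_splus_subset.trans attrs_restrict_subset)

lemma union_mem_ESys {p : List (ℕ × Option ℕ)} (hα : α ∈ ESys S ext)
    (hnd : (p.map Prod.fst).Nodup) (hattrs : ∀ e ∈ p, e.1 ∈ attrs (restrict S α))
    (hval : ∀ e ∈ p, e.2 ∈ allowed S ext e.1) : α ∪ p.toFinset ∈ ESys S ext := by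
  refine ⟨hα.1.union (consistentE_toFinset hnd) fun e he =>
    notMem_of_mem_attrs_restrict (hattrs e (List.mem_toFinset.1 he)), fun e he => ?_⟩
  rcases mem_union.1 he with he | he
  · exact hα.2 e he
  · have he := List.mem_toFinset.1 he
    exact ⟨attrs_restrict_subset (hattrs e he), hval e he⟩

end Covers

lemma _root_.Finset.insert_union_toFinset {γ : Type*} [DecidableEq γ] (s : Finset γ) (x : γ)
    (l : List γ) : insert x s ∪ l.toFinset = s ∪ (x :: l).toFinset := by
  rw [List.toFinset_cons, insert_union, union_insert]

section Numbering

variable {β : Type*} {s : Finset β} {x : β} {v : ℕ} {d : β}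

lemma _root_.Finset.getD_toList_mem (hv : v < s.card) : s.toList.getD v d ∈ s := by
  rw [List.getD_eq_getElem _ _ (length_toList s ▸ hv)]
  exact mem_toList.1 (List.getElem_mem _)

variable [BEq β] [LawfulBEq β]

lemma _root_.Finset.idxOf_toList_lt (hx : x ∈ s) : s.toList.idxOf x < s.card :=
  length_toList s ▸ List.idxOf_lt_length_iff.2 (mem_toList.2 hx)

lemma _root_.Finset.getD_toList_idxOf (hx : x ∈ s) : s.toList.getD (s.toList.idxOf x) d = x := by
  rw [List.getD_eq_getElem _ _ (length_toList s ▸ Finset.idxOf_toList_lt hx)]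
  exact List.getElem_idxOf _

lemma _root_.Finset.idxOf_toList_getD (hv : v < s.card) :
    s.toList.idxOf (s.toList.getD v d) = v := by
  rw [List.getD_eq_getElem _ _ (length_toList s ▸ hv)]
  exact (nodup_toList s).idxOf_getElem _ _

end Numbering

inductive DTree where
  | leaf : Finset Rule → DTree
  | node : ℕ → (Option ℕ → DTree) → DTree

namespace DTree

section

variable (V : ℕ → Finset (Option ℕ))

def step : DTree → ℕ × Option ℕ → Option DTree
  | leaf _, _ => none
  | node a c, e => if e.1 = a ∧ e.2 ∈ V a then some (c e.2) else none

/-- A position records the equations `(attribute, answer)` met on the way from the root, so the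
equation system of a complete path is the set of entries of its position. -/
def follow : DTree → List (ℕ × Option ℕ) → Option DTree
  | t, [] => some t
  | t, e :: p => (t.step V e).bind fun u => u.follow p

def height : DTree → ℕ
  | leaf _ => 0
  | node a c => (V a).sup (fun l => (c l).height) + 1

def positions : DTree → Finset (List (ℕ × Option ℕ))
  | leaf _ => {[]}
  | node a c => insert [] ((V a).biUnion fun l => ((c l).positions).image (List.cons (a, l)))

variable {V}

lemma step_node_eq_some_iff {a : ℕ} {c : Option ℕ → DTree} {e : ℕ × Option ℕ} {u : DTree} :
    (node a c).step V e = some u ↔ e.1 = a ∧ e.2 ∈ V a ∧ c e.2 = u := by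
  simp [step, and_assoc]

@[simp] lemma follow_nil (t : DTree) : t.follow V [] = some t := rfl

lemma follow_cons (t : DTree) (e : ℕ × Option ℕ) (p : List (ℕ × Option ℕ)) :
    t.follow V (e :: p) = (t.step V e).bind fun u => u.follow V p := rfl

lemma follow_append (t : DTree) (p q : List (ℕ × Option ℕ)) :
    t.follow V (p ++ q) = (t.follow V p).bind fun u => u.follow V q := by
  induction p generalizing t with
  | nil => rfl
  | cons e p ih =>
    simp only [List.cons_append, follow_cons, ih, Option.bind_assoc]

lemma follow_concat (t : DTree) (p : List (ℕ × Option ℕ)) (e : ℕ × Option ℕ) :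
    t.follow V (p ++ [e]) = (t.follow V p).bind fun u => u.step V e := by
  rw [follow_append]
  congr 1
  funext u
  simp [follow_cons]

lemma isSome_follow_of_append {t : DTree} {p q : List (ℕ × Option ℕ)}
    (h : (t.follow V (p ++ q)).isSome) : (t.follow V p).isSome := by
  rw [follow_append] at h
  cases hp : t.follow V p <;> simp_all

lemma length_le_height {t u : DTree} {p : List (ℕ × Option ℕ)}
    (h : t.follow V p = some u) : p.length ≤ t.height V := by
  induction p generalizing t with
  | nil => exact Nat.zero_le _
  | cons e p ih =>
    rw [follow_cons, Option.bind_eq_some_iff] at h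
    obtain ⟨v, hv, hvu⟩ := h
    cases t with
    | leaf => simp [step] at hv
    | node a c =>
      obtain ⟨-, he, rfl⟩ := step_node_eq_some_iff.1 hv
      have := le_sup (f := fun l => (c l).height V) he
      simp only [height, List.length_cons]
      exact Nat.succ_le_succ ((ih hvu).trans this)

lemma mem_positions {t : DTree} {p : List (ℕ × Option ℕ)} :
    p ∈ t.positions V ↔ (t.follow V p).isSome := by
  induction p generalizing t with
  | nil => cases t <;> simp [positions]
  | cons e p ih =>
    cases t with
    | leaf => simp [positions, follow_cons, step]
    | node a c =>
      obtain ⟨b, l⟩ := e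
      simp only [positions, mem_insert, reduceCtorEq, false_or, mem_biUnion, mem_image,
        List.cons.injEq, Prod.mk.injEq, follow_cons, step]
      by_cases h : b = a ∧ l ∈ V a
      · simp [h, ← ih]
      · simp only [if_neg h, Option.bind_none, Option.isSome_none, Bool.false_eq_true,
          iff_false, not_exists, not_and]
        rintro l' hl' q - ⟨rfl, rfl⟩
        exact absurd ⟨rfl, hl'⟩ h

end

def IsOver (S : Finset Rule) : DTree → Prop
  | leaf Z => Z ⊆ S
  | node a c => a ∈ attrs S ∧ ∀ l, (c l).IsOver S

lemma IsOver.follow {S : Finset Rule} {V : ℕ → Finset (Option ℕ)} {t u : DTree}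
    {p : List (ℕ × Option ℕ)} (ht : t.IsOver S) (h : t.follow V p = some u) : u.IsOver S := by
  induction p generalizing t with
  | nil => exact Option.some.inj h ▸ ht
  | cons e p ih =>
    rw [follow_cons, Option.bind_eq_some_iff] at h
    obtain ⟨v, hv, hvu⟩ := h
    cases t with
    | leaf => simp [step] at hv
    | node a c =>
      obtain ⟨-, -, rfl⟩ := step_node_eq_some_iff.1 hv
      exact ih (ht.2 _) hvu

end DTree

section Greedy

open DTree

variable {S : Finset Rule} {V : ℕ → Finset (Option ℕ)}

def askAll (next : Finset (ℕ × Option ℕ) → DTree) :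
    List ℕ → Finset (ℕ × Option ℕ) → DTree
  | [], α => next α
  | a :: L, α => node a fun l => askAll next L (insert (a, l) α)

lemma follow_askAll_eq_leaf {next : Finset (ℕ × Option ℕ) → DTree} {L : List ℕ}
    {α : Finset (ℕ × Option ℕ)} {p : List (ℕ × Option ℕ)} {Z : Finset Rule}
    (h : (askAll next L α).follow V p = some (leaf Z)) :
    ∃ p₁ p₂, p = p₁ ++ p₂ ∧ p₁.map Prod.fst = L ∧
      (next (α ∪ p₁.toFinset)).follow V p₂ = some (leaf Z) := by
  induction L generalizing α p with
  | nil => exact ⟨[], p, rfl, rfl, by simpa [askAll] using h⟩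
  | cons a L ih =>
    cases p with
    | nil => simp [askAll] at h
    | cons e p =>
      obtain ⟨b, l⟩ := e
      rw [askAll, follow_cons, Option.bind_eq_some_iff] at h
      obtain ⟨u, hu, hup⟩ := h
      obtain ⟨rfl, -, rfl⟩ := step_node_eq_some_iff.1 hu
      obtain ⟨p₁, p₂, rfl, rfl, hf⟩ := ih hup
      exact ⟨(b, l) :: p₁, p₂, rfl, rfl, insert_union_toFinset α _ p₁ ▸ hf⟩

lemma height_askAll_le {next : Finset (ℕ × Option ℕ) → DTree} {D : ℕ} {L : List ℕ}
    {α : Finset (ℕ × Option ℕ)}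
    (h : ∀ p : List (ℕ × Option ℕ), p.map Prod.fst = L → (∀ e ∈ p, e.2 ∈ V e.1) →
      (next (α ∪ p.toFinset)).height V ≤ D) :
    (askAll next L α).height V ≤ L.length + D := by
  induction L generalizing α with
  | nil => simpa [askAll] using h [] rfl
  | cons a L ih =>
    rw [askAll, height, List.length_cons, add_right_comm]
    refine Nat.succ_le_succ (Finset.sup_le fun l hl => ih fun p hp hpV => ?_)
    rw [insert_union_toFinset]
    refine h _ (by simp [hp]) fun e he => ?_
    rcases List.mem_cons.1 he with rfl | he
    exacts [hl, hpV e he]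

lemma isOver_askAll {next : Finset (ℕ × Option ℕ) → DTree} {L : List ℕ}
    (hL : ∀ a ∈ L, a ∈ attrs S) (hnext : ∀ α, (next α).IsOver S) :
    ∀ α, (askAll next L α).IsOver S := by
  induction L with
  | nil => exact hnext
  | cons a L ih =>
    exact fun α => ⟨hL a List.mem_cons_self,
      fun l => ih (fun b hb => hL b (List.mem_cons_of_mem a hb)) _⟩

def satisfiedRules (S : Finset Rule) (α : Finset (ℕ × Option ℕ)) : Finset Rule :=
  S.filter fun r => liftK r.K ⊆ α

def greedyTree (S : Finset Rule) : ℕ → Finset (ℕ × Option ℕ) → DTree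
  | 0, α => leaf (satisfiedRules S α)
  | k + 1, α =>
    if dPar (restrict S α) = 0 then leaf (satisfiedRules S α)
    else askAll (greedyTree S k) (minCover (Splus (restrict S α))).toList α

lemma greedyTree_of_dPar_eq_zero {α : Finset (ℕ × Option ℕ)} (h : dPar (restrict S α) = 0)
    (k : ℕ) : greedyTree S k α = leaf (satisfiedRules S α) := by
  cases k <;> simp [greedyTree, h]

lemma greedyTree_succ {α : Finset (ℕ × Option ℕ)} (h : dPar (restrict S α) ≠ 0) (k : ℕ) :
    greedyTree S (k + 1) α =
      askAll (greedyTree S k) (minCover (Splus (restrict S α))).toList α := by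
  simp [greedyTree, h]

lemma dPar_restrict_union_lt {α : Finset (ℕ × Option ℕ)} {p : List (ℕ × Option ℕ)}
    (h : dPar (restrict S α) ≠ 0)
    (hp : p.map Prod.fst = (minCover (Splus (restrict S α))).toList) :
    dPar (restrict S (α ∪ p.toFinset)) < dPar (restrict S α) := by
  refine dPar_restrict_lt (isNodeCover_minCover _) (Nat.pos_of_ne_zero h) subset_union_left
    fun a ha => ?_
  obtain ⟨e, he, rfl⟩ := List.mem_map.1 (hp ▸ mem_toList.2 ha)
  exact ⟨e.2, mem_union_right _ (List.mem_toFinset.2 he)⟩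

lemma isOver_greedyTree (k : ℕ) : ∀ α, (greedyTree S k α).IsOver S := by
  induction k with
  | zero => exact fun α => filter_subset _ _
  | succ k ih =>
    intro α
    by_cases h : dPar (restrict S α) = 0
    · rw [greedyTree_of_dPar_eq_zero h]
      exact filter_subset _ _
    · rw [greedyTree_succ h]
      exact isOver_askAll (fun a ha => attrs_restrict_subset
        (minCover_splus_subset (mem_toList.1 ha))) ih α

lemma greedyTree_leaf {k : ℕ} {α : Finset (ℕ × Option ℕ)} {p : List (ℕ × Option ℕ)}
    {Z : Finset Rule} (hk : dPar (restrict S α) ≤ k)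
    (h : (greedyTree S k α).follow V p = some (leaf Z)) :
    Z = satisfiedRules S (α ∪ p.toFinset) ∧ dPar (restrict S (α ∪ p.toFinset)) = 0 := by
  have leaf_case : ∀ {k α p}, dPar (restrict S α) = 0 →
      (greedyTree S k α).follow V p = some (leaf Z) →
      Z = satisfiedRules S (α ∪ p.toFinset) ∧ dPar (restrict S (α ∪ p.toFinset)) = 0 := by
    intro k α p h0 h
    rw [greedyTree_of_dPar_eq_zero h0] at h
    cases p with
    | nil => simp_all
    | cons => simp [follow_cons, step] at h
  induction k generalizing α p with
  | zero => exact leaf_case (Nat.le_zero.1 hk) h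
  | succ k ih =>
    by_cases h0 : dPar (restrict S α) = 0
    · exact leaf_case h0 h
    rw [greedyTree_succ h0] at h
    obtain ⟨p₁, p₂, rfl, hp₁, hf⟩ := follow_askAll_eq_leaf h
    have := ih (by have := dPar_restrict_union_lt h0 hp₁; omega) hf
    rwa [List.toFinset_append, ← union_assoc]

lemma height_greedyTree_le {ext : Bool} {k : ℕ} {α : Finset (ℕ × Option ℕ)}
    (hα : α ∈ ESys S ext) (hk : dPar (restrict S α) ≤ k) :
    (greedyTree S k α).height (allowed S ext) ≤ k * betaCplus S ext := by
  induction k generalizing α with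
  | zero => simp [greedyTree, height]
  | succ k ih =>
    by_cases h0 : dPar (restrict S α) = 0
    · simp [greedyTree_of_dPar_eq_zero h0, height]
    rw [greedyTree_succ h0, Nat.succ_mul]
    have hlen : (minCover (Splus (restrict S α))).toList.length ≤ betaCplus S ext := by
      rw [length_toList, card_minCover]
      exact betaPlus_restrict_le_betaCplus hα
    refine (height_askAll_le fun p hp hval => ih ?_ ?_).trans (by omega)
    · have hnd : (p.map Prod.fst).Nodup := hp ▸ nodup_toList _
      refine union_mem_ESys hα hnd (fun e he => minCover_splus_subset ?_) hval
      exact mem_toList.1 (hp ▸ List.mem_map_of_mem he)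
    · have := dPar_restrict_union_lt h0 hp
      omega

end Greedy

lemma DGraph.pathEqs_cons_of_label_eq {G : DGraph} {x a : ℕ} {l : Option ℕ}
    {p : List (ℕ × Option ℕ)} (hx : G.label x = .inl a) :
    G.pathEqs ((x, l) :: p) = insert (a, l) (G.pathEqs p) := by
  simp [DGraph.pathEqs, hx]

namespace DTree

variable {V : ℕ → Finset (Option ℕ)} {t u : DTree} {h : List (ℕ × Option ℕ)}
  {e : ℕ × Option ℕ}

def rootLabel : DTree → ℕ ⊕ Finset Rule
  | leaf Z => .inr Z
  | node a _ => .inl a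

def branches (V : ℕ → Finset (Option ℕ)) : DTree → Finset (ℕ × Option ℕ)
  | leaf _ => ∅
  | node a _ => (V a).image (a, ·)

def subtreeAt (V : ℕ → Finset (Option ℕ)) (t : DTree) (h : List (ℕ × Option ℕ)) : DTree :=
  (t.follow V h).getD (leaf ∅)

def index (V : ℕ → Finset (Option ℕ)) (t : DTree) (h : List (ℕ × Option ℕ)) : ℕ :=
  (t.positions V).toList.idxOf h

def posAt (V : ℕ → Finset (Option ℕ)) (t : DTree) (v : ℕ) : List (ℕ × Option ℕ) :=
  (t.positions V).toList.getD v []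

def toDGraph (V : ℕ → Finset (Option ℕ)) (t : DTree) : DGraph where
  n := (t.positions V).card
  root := t.index V []
  label v := (t.subtreeAt V (t.posAt V v)).rootLabel
  edges := (t.positions V).biUnion fun h =>
    ((t.subtreeAt V h).branches V).image fun e => (t.index V h, e.2, t.index V (h ++ [e]))

lemma isSome_step_node {a : ℕ} {c : Option ℕ → DTree} :
    ((node a c).step V e).isSome ↔ e.1 = a ∧ e.2 ∈ V a := by
  by_cases h : e.1 = a ∧ e.2 ∈ V a <;> simp [step, h]

lemma isSome_follow_concat :
    (t.follow V (h ++ [e])).isSome ↔ h ∈ t.positions V ∧ e ∈ (t.subtreeAt V h).branches V := by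
  rw [follow_concat, mem_positions, subtreeAt]
  cases t.follow V h with
  | none => simp
  | some u =>
    cases u with
    | leaf => simp [step, branches]
    | node a c =>
      rw [Option.bind_some, isSome_step_node]
      obtain ⟨b, l⟩ := e
      simp [branches, and_comm, eq_comm]

lemma index_lt (hh : h ∈ t.positions V) : t.index V h < (t.positions V).card :=
  Finset.idxOf_toList_lt hh

lemma posAt_index (hh : h ∈ t.positions V) : t.posAt V (t.index V h) = h :=
  Finset.getD_toList_idxOf hh

lemma posAt_mem {v : ℕ} (hv : v < (t.positions V).card) : t.posAt V v ∈ t.positions V :=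
  Finset.getD_toList_mem hv

lemma index_posAt {v : ℕ} (hv : v < (t.positions V).card) : t.index V (t.posAt V v) = v :=
  Finset.idxOf_toList_getD hv

lemma index_injOn : Set.InjOn (t.index V) (t.positions V) := fun h hh h' hh' heq => by
  rw [← posAt_index hh, heq, posAt_index hh']

lemma nil_mem_positions : [] ∈ t.positions V := mem_positions.2 rfl

lemma mem_toDGraph_edges {x w : ℕ} {l : Option ℕ} :
    (x, l, w) ∈ (t.toDGraph V).edges ↔ ∃ h e, (t.follow V (h ++ [e])).isSome ∧
      x = t.index V h ∧ l = e.2 ∧ w = t.index V (h ++ [e]) := by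
  simp only [toDGraph, mem_biUnion, mem_image, Prod.mk.injEq, isSome_follow_concat]
  constructor
  · rintro ⟨h, hh, e, he, rfl, rfl, rfl⟩
    exact ⟨h, e, ⟨hh, he⟩, rfl, rfl, rfl⟩
  · rintro ⟨h, e, ⟨hh, he⟩, rfl, rfl, rfl⟩
    exact ⟨h, hh, e, he, rfl, rfl, rfl⟩

lemma mem_toDGraph_edges_index (hh : h ∈ t.positions V) {l : Option ℕ} {w : ℕ} :
    (t.index V h, l, w) ∈ (t.toDGraph V).edges ↔ ∃ e, (t.follow V (h ++ [e])).isSome ∧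
      l = e.2 ∧ w = t.index V (h ++ [e]) := by
  rw [mem_toDGraph_edges]
  constructor
  · rintro ⟨h', e, he, hx, rfl, rfl⟩
    have hh' := mem_positions.2 (isSome_follow_of_append he)
    exact ⟨e, index_injOn hh hh' hx ▸ he, rfl, by rw [index_injOn hh hh' hx]⟩
  · rintro ⟨e, he, rfl, rfl⟩
    exact ⟨h, e, he, rfl, rfl, rfl⟩

lemma toDGraph_label_index (hu : t.follow V h = some u) :
    (t.toDGraph V).label (t.index V h) = u.rootLabel := by
  simp [toDGraph, posAt_index (mem_positions.2 (Option.isSome_of_eq_some hu)), subtreeAt, hu]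

lemma toDGraph_acyclic : (t.toDGraph V).Acyclic := by
  have hstep : ∀ x y, (t.toDGraph V).step x y → (t.posAt V x).length < (t.posAt V y).length := by
    rintro x y ⟨l, hxy⟩
    obtain ⟨h, e, he, rfl, -, rfl⟩ := mem_toDGraph_edges.1 hxy
    rw [posAt_index (mem_positions.2 he),
      posAt_index (mem_positions.2 (isSome_follow_of_append he)), List.length_append]
    exact Nat.lt_succ_self _
  intro v hv
  have : ∀ x y, Relation.TransGen (t.toDGraph V).step x y →
      (t.posAt V x).length < (t.posAt V y).length := by
    intro x y hxy
    induction hxy with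
    | single h => exact hstep _ _ h
    | tail _ h ih => exact ih.trans (hstep _ _ h)
  exact lt_irrefl _ (this v v hv)

lemma toDGraph_isTree : (t.toDGraph V).IsTree := by
  refine ⟨fun ⟨x, l, w⟩ hxw hroot => ?_, fun v hv hne => ?_⟩
  · obtain ⟨h, e, he, -, -, rfl⟩ := mem_toDGraph_edges.1 hxw
    simpa using index_injOn (mem_positions.2 he) nil_mem_positions hroot
  · obtain hnil | ⟨g, e, hge⟩ := List.eq_nil_or_concat' (t.posAt V v)
    · exact absurd (by rw [← index_posAt hv, hnil]; rfl) hne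
    have he : (t.follow V (g ++ [e])).isSome := hge ▸ mem_positions.1 (posAt_mem hv)
    refine ⟨(t.index V g, e.2, v), ⟨mem_toDGraph_edges.2 ⟨g, e, he, rfl, rfl, ?_⟩, rfl⟩, ?_⟩
    · rw [← hge, index_posAt hv]
    · rintro ⟨x, l, w⟩ ⟨hxw, rfl⟩
      obtain ⟨h', e', he', rfl, rfl, hw⟩ := mem_toDGraph_edges.1 hxw
      have := index_injOn (mem_positions.2 he') (mem_positions.2 he) (hw.symm.trans (by
        rw [← hge, index_posAt hv]))
      obtain ⟨rfl, rfl⟩ := List.append_inj' this rfl |>.imp id List.head_eq_of_cons_eq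
      rfl

lemma exists_follow_of_chainFrom {p : List (ℕ × Option ℕ)} {v : ℕ} (hh : h ∈ t.positions V)
    (hp : (t.toDGraph V).chainFrom (t.index V h) p v) :
    ∃ q u, t.follow V (h ++ q) = some u ∧ v = t.index V (h ++ q) ∧
      (t.toDGraph V).pathEqs p = q.toFinset ∧ p.length = q.length := by
  induction p generalizing h with
  | nil =>
    obtain ⟨u, hu⟩ := Option.isSome_iff_exists.1 (mem_positions.1 hh)
    exact ⟨[], u, by simpa using hu, by simpa using hp.symm, rfl, rfl⟩
  | cons x p ih =>
    obtain ⟨x, l⟩ := x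
    obtain ⟨rfl, w, hxw, hp⟩ := hp
    obtain ⟨e, he, hl, rfl⟩ := (mem_toDGraph_edges_index hh).1 hxw
    obtain ⟨q, u, hq, rfl, hpq, hlen⟩ := ih (mem_positions.2 he) hp
    obtain ⟨u', hu'⟩ := Option.isSome_iff_exists.1 (mem_positions.1 hh)
    obtain ⟨a, c, rfl, hea⟩ : ∃ a c, u' = node a c ∧ e.1 = a := by
      rw [follow_concat, hu', Option.bind_some] at he
      cases u' with
      | leaf => simp [step] at he
      | node a c => exact ⟨a, c, rfl, (isSome_step_node.1 he).1⟩
    refine ⟨e :: q, u, by simpa using hq, by simp, ?_, by simp [hlen]⟩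
    rw [DGraph.pathEqs_cons_of_label_eq (toDGraph_label_index hu'), hpq, List.toFinset_cons,
      show l = e.2 from hl, ← hea]

lemma exists_follow_of_isCompletePath {p : List (ℕ × Option ℕ)} {v : ℕ}
    (hp : (t.toDGraph V).IsCompletePath p v) :
    ∃ q u, t.follow V q = some u ∧ v = t.index V q ∧
      (t.toDGraph V).pathEqs p = q.toFinset ∧ p.length = q.length := by
  simpa using exists_follow_of_chainFrom nil_mem_positions hp.1

lemma depth_toDGraph_le : (t.toDGraph V).depth ≤ t.height V := by
  refine csSup_le' ?_
  rintro _ ⟨p, v, hp, rfl⟩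
  obtain ⟨q, u, hq, -, -, hlen⟩ := exists_follow_of_isCompletePath hp
  exact hlen ▸ length_le_height hq

lemma mem_toDGraph_edges_of_follow_eq_node {a : ℕ} {c : Option ℕ → DTree} {l : Option ℕ}
    {w : ℕ} (hu : t.follow V h = some (node a c)) :
    (t.index V h, l, w) ∈ (t.toDGraph V).edges ↔ l ∈ V a ∧ w = t.index V (h ++ [(a, l)]) := by
  rw [mem_toDGraph_edges_index (mem_positions.2 (Option.isSome_of_eq_some hu))]
  simp only [follow_concat, hu, Option.bind_some, isSome_step_node]
  constructor
  · rintro ⟨⟨b, l⟩, ⟨rfl, hl⟩, rfl, rfl⟩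
    exact ⟨hl, rfl⟩
  · rintro ⟨hl, rfl⟩
    exact ⟨(a, l), ⟨rfl, hl⟩, rfl, rfl⟩

lemma isTerminal_of_follow_eq_leaf {Z : Finset Rule} (hu : t.follow V h = some (leaf Z)) :
    (t.toDGraph V).IsTerminal (t.index V h) := by
  rintro ⟨x, l, w⟩ hxw rfl
  obtain ⟨e, he, -⟩ := (mem_toDGraph_edges_index
    (mem_positions.2 (Option.isSome_of_eq_some hu))).1 hxw
  simp [follow_concat, hu, step] at he

lemma not_isTerminal_of_follow_eq_node {a : ℕ} {c : Option ℕ → DTree} (ha : (V a).Nonempty)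
    (hu : t.follow V h = some (node a c)) : ¬ (t.toDGraph V).IsTerminal (t.index V h) := by
  obtain ⟨l, hl⟩ := ha
  exact fun hterm => hterm _ ((mem_toDGraph_edges_of_follow_eq_node hu).2 ⟨hl, rfl⟩) rfl

lemma termSet_toDGraph_index {Z : Finset Rule} (hu : t.follow V h = some (leaf Z)) :
    (t.toDGraph V).termSet (t.index V h) = Z := by
  simp [DGraph.termSet, toDGraph_label_index hu, rootLabel]

section

variable {S : Finset Rule} {ext : Bool}

lemma toDGraph_isDG (ht : t.IsOver S) : (t.toDGraph (allowed S ext)).IsDG S ext := by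
  refine ⟨index_lt nil_mem_positions, fun ⟨x, l, w⟩ hxw => ?_, toDGraph_acyclic, fun v hv => ?_⟩
  · obtain ⟨h, e, he, rfl, -, rfl⟩ := mem_toDGraph_edges.1 hxw
    exact ⟨index_lt (mem_positions.2 (isSome_follow_of_append he)),
      index_lt (mem_positions.2 he)⟩
  obtain ⟨h, hh, rfl⟩ : ∃ h ∈ t.positions (allowed S ext), t.index _ h = v :=
    ⟨_, posAt_mem hv, index_posAt hv⟩
  obtain ⟨u, hu⟩ := Option.isSome_iff_exists.1 (mem_positions.1 hh)
  cases u with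
  | leaf Z =>
    rw [if_pos (isTerminal_of_follow_eq_leaf hu)]
    exact ⟨Z, toDGraph_label_index hu, ht.follow hu⟩
  | node a c =>
    have ha : a ∈ attrs S := (ht.follow hu).1
    rw [if_neg (not_isTerminal_of_follow_eq_node (nonempty_allowed ha) hu)]
    refine ⟨a, toDGraph_label_index hu, ha, fun l => ?_, fun l w w' hw hw' => ?_⟩
    · simp only [mem_toDGraph_edges_of_follow_eq_node hu, exists_and_left, exists_eq, and_true]
    · rw [((mem_toDGraph_edges_of_follow_eq_node hu).1 hw).2,
        ((mem_toDGraph_edges_of_follow_eq_node hu).1 hw').2]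

end

end DTree

section Main

open DTree

variable {S : Finset Rule} {ext : Bool}

lemma solvesAR_toDGraph_greedyTree :
    ((greedyTree S (dPar S) ∅).toDGraph (allowed S ext)).SolvesAR S := by
  intro p v hp _
  obtain ⟨q, u, hq, rfl, hpq, -⟩ := exists_follow_of_isCompletePath hp
  cases u with
  | node a c =>
    exact absurd hp.2.1 (not_isTerminal_of_follow_eq_node
      (nonempty_allowed ((isOver_greedyTree _ _).follow hq).1) hq)
  | leaf Z =>
    obtain ⟨rfl, hd⟩ := greedyTree_leaf dPar_restrict_le hq
    rw [termSet_toDGraph_index hq, hpq, ← empty_union q.toFinset]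
    exact ⟨fun r hr => (mem_filter.1 hr).2, fun r hr hrZ hc =>
      hrZ (mem_filter.2 ⟨hr, liftK_subset_of_dPar_restrict_eq_zero hd hr hc⟩)⟩

theorem exists_dgraph_solvesAR_depth_le (S : Finset Rule) (ext : Bool) :
    ∃ G : DGraph, (G.IsDG S ext ∧ G.IsTree ∧ G.SolvesAR S) ∧
      G.depth ≤ dPar S * betaCplus S ext := by
  have hempty : (∅ : Finset (ℕ × Option ℕ)) ∈ ESys S ext := by simp [ESys, ConsistentE]
  exact ⟨_, ⟨toDGraph_isDG (isOver_greedyTree _ _), toDGraph_isTree,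
    solvesAR_toDGraph_greedyTree⟩,
    depth_toDGraph_le.trans (height_greedyTree_le hempty dPar_restrict_le)⟩

end Main

theorem statement_13_general (S : Finset Rule) :
    h_AR S ≤ dPar S * beta_ARplus S ∧ h_EAR S ≤ dPar S * beta_EARplus S := by
  obtain ⟨G, hG, hdepth⟩ := exists_dgraph_solvesAR_depth_le S false
  obtain ⟨G', hG', hdepth'⟩ := exists_dgraph_solvesAR_depth_le S true
  refine ⟨(Nat.sInf_le ?_).trans hdepth, (Nat.sInf_le ?_).trans hdepth'⟩
  exacts [⟨G, hG, rfl⟩, ⟨G', hG', rfl⟩]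

/-- Lemma 15: for C ∈ {AR, EAR}, h_C(S) ≤ d(S)·β_C⁺(S). -/
theorem statement_13 (S : Finset Rule) (hS : S.Nonempty) (hwf : ∀ r ∈ S, r.WF)
    (hn : 0 < nPar S) :
    h_AR S ≤ dPar S * beta_ARplus S ∧ h_EAR S ≤ dPar S * beta_EARplus S :=
  statement_13_general S

end DRS

end
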